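/- arXiv:1705.05777 — 5 statements merged into one kernel-verified Lean document; each statement's English description precedes it below -/
import Mathlib

section
/- Consequently, the empirical distance variance V_n^2 = T_{1,n} + T_{2,n} - 2 T_{3,n} satisfies V_n^2 \le T_{2,n}, i.e., the empirical distance standard deviation is bounded above by the empirical Gini mean difference. -/
open scoped BigOperators

/-! Expanding `V_n²` shows that `V_n² ≤ T_{2,n}` amounts to `T_{1,n} ≤ 2 T_{3,n}`. Multiplying the
triangle inequality `d(i,j) ≤ d(i,k) + d(k,j)` by `d(i,j)` and summing over all triples gives
`n ∑ d(i,j)² ≤ ∑ d(i,j) d(i,k) + ∑ d(i,j) d(k,j)`, and by symmetry of `d` the two sums on the right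
agree, both being `n³ T_{3,n}`. -/

section

variable {ι α : Type*} [Fintype ι] [PseudoMetricSpace α] (x : ι → α)

theorem sum_sum_sum_dist_mul_dist_comm :
    ∑ i, ∑ j, ∑ k, dist (x i) (x j) * dist (x k) (x j) =
      ∑ i, ∑ j, ∑ k, dist (x i) (x j) * dist (x i) (x k) := by
  rw [Finset.sum_comm]
  simp only [dist_comm (x _) (x _)]

theorem card_mul_sum_sum_dist_sq_le :
    Fintype.card ι * ∑ i, ∑ j, dist (x i) (x j) ^ 2 ≤
      2 * ∑ i, ∑ j, ∑ k, dist (x i) (x j) * dist (x i) (x k) := by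
  calc Fintype.card ι * ∑ i, ∑ j, dist (x i) (x j) ^ 2
      = ∑ i, ∑ j, ∑ _k : ι, dist (x i) (x j) ^ 2 := by
        simp [Finset.mul_sum]
    _ ≤ ∑ i, ∑ j, ∑ k, (dist (x i) (x j) * dist (x i) (x k) +
          dist (x i) (x j) * dist (x k) (x j)) := by
        gcongr with i _ j _ k _
        rw [sq, ← mul_add]
        exact mul_le_mul_of_nonneg_left (dist_triangle _ _ _) dist_nonneg
    _ = 2 * ∑ i, ∑ j, ∑ k, dist (x i) (x j) * dist (x i) (x k) := by
        simp only [Finset.sum_add_distrib, sum_sum_sum_dist_mul_dist_comm]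
        ring

theorem mean_dist_sq_le_two_mul_mean_dist_mul_dist :
    1 / (Fintype.card ι : ℝ) ^ 2 * ∑ i, ∑ j, dist (x i) (x j) ^ 2 ≤
      2 * (1 / (Fintype.card ι : ℝ) ^ 3 *
        ∑ i, ∑ j, ∑ k, dist (x i) (x j) * dist (x i) (x k)) := by
  set N : ℝ := (Fintype.card ι : ℝ)
  have hN : 1 / N ^ 2 = 1 / N ^ 3 * N := by
    rcases eq_or_ne N 0 with h | h
    · simp [h]
    · field_simp
  rw [hN, mul_assoc, mul_left_comm 2]
  exact mul_le_mul_of_nonneg_left (card_mul_sum_sum_dist_sq_le x) (by positivity)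

end

theorem dVar_n_le_T2n_general (p n : ℕ) (X : Fin n → EuclideanSpace ℝ (Fin p)) :
    ((1 / (n : ℝ) ^ 2) * ∑ i, ∑ j, ‖X i - X j‖ ^ 2)
        + ((1 / (n : ℝ) ^ 2) * ∑ i, ∑ j, ‖X i - X j‖) ^ 2
        - 2 * ((1 / (n : ℝ) ^ 3) * ∑ i, ∑ j, ∑ k, ‖X i - X j‖ * ‖X i - X k‖) ≤
      ((1 / (n : ℝ) ^ 2) * ∑ i, ∑ j, ‖X i - X j‖) ^ 2 := by
  have h := mean_dist_sq_le_two_mul_mean_dist_mul_dist X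
  simp only [Fintype.card_fin, dist_eq_norm] at h
  linarith

/-- The empirical distance variance `V_n² = T_{1,n} + T_{2,n} - 2 T_{3,n}` is at most
`T_{2,n}`, the squared empirical Gini mean difference. -/
theorem dVar_n_le_T2n (p n : ℕ) (hn : 0 < n) (X : Fin n → EuclideanSpace ℝ (Fin p)) :
    ((1 / (n : ℝ) ^ 2) * ∑ i, ∑ j, ‖X i - X j‖ ^ 2)
        + ((1 / (n : ℝ) ^ 2) * ∑ i, ∑ j, ‖X i - X j‖) ^ 2
        - 2 * ((1 / (n : ℝ) ^ 3) * ∑ i, ∑ j, ∑ k, ‖X i - X j‖ * ‖X i - X k‖) ≤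
      ((1 / (n : ℝ) ^ 2) * ∑ i, ∑ j, ‖X i - X j‖) ^ 2 :=
  dVar_n_le_T2n_general p n X
end

section
/- The empirical distance variance V_n^2 = T_{1,n} + T_{2,n} - 2 T_{3,n} is at most (1/2) T_{1,n}; in particular, in dimension one it is bounded above by the (biased) empirical variance n^{-2} \sum_{i<j} (X_i - X_j)^2 \cdot 2 / 2 = half of T_{1,n}. -/
/-!
Write `d i j` for the distance between the `i`-th and `j`-th points and `r i = ∑ j, d i j`, so
that the triple sum in `T₃` is `∑ i, r i ^ 2`. Cauchy–Schwarz on the row sums `r` gives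
`T₂ ≤ T₃`. Multiplying the triangle inequality `d j k ≤ d j i + d i k` by `d j k` and summing
over `i, j, k` gives `T₁ ≤ 2 T₃`. Hence `V² = T₁ + T₂ - 2 T₃ ≤ T₁ - T₃ ≤ T₁ / 2`.
-/

open Finset

namespace DistanceVariance

variable {ι α : Type*} [Fintype ι] [PseudoMetricSpace α] (x : ι → α)

noncomputable def T₁ : ℝ := 1 / (Fintype.card ι : ℝ) ^ 2 * ∑ i, ∑ j, dist (x i) (x j) ^ 2

noncomputable def T₂ : ℝ := (1 / (Fintype.card ι : ℝ) ^ 2 * ∑ i, ∑ j, dist (x i) (x j)) ^ 2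

noncomputable def T₃ : ℝ :=
  1 / (Fintype.card ι : ℝ) ^ 3 * ∑ i, ∑ j, ∑ k, dist (x i) (x j) * dist (x i) (x k)

theorem sum_sum_sum_dist_mul_dist :
    ∑ i, ∑ j, ∑ k, dist (x i) (x j) * dist (x i) (x k) = ∑ i, (∑ j, dist (x i) (x j)) ^ 2 := by
  simp only [sq, sum_mul_sum]

theorem card_mul_sum_sum_dist_sq_le :
    Fintype.card ι * ∑ j, ∑ k, dist (x j) (x k) ^ 2 ≤
      2 * ∑ i, (∑ j, dist (x i) (x j)) ^ 2 := by
  have hpoint : ∀ i j k, dist (x j) (x k) ^ 2 ≤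
      dist (x j) (x k) * dist (x j) (x i) + dist (x j) (x k) * dist (x i) (x k) := by
    intro i j k
    rw [sq, ← mul_add]
    exact mul_le_mul_of_nonneg_left (dist_triangle _ _ _) dist_nonneg
  have hfirst : ∑ i, ∑ j, ∑ k, dist (x j) (x k) * dist (x j) (x i) =
      ∑ i, (∑ j, dist (x i) (x j)) ^ 2 := by
    rw [sum_comm]
    refine sum_congr rfl fun j _ => ?_
    rw [sq, sum_mul_sum, sum_comm]
  have hsecond : ∑ i, ∑ j, ∑ k, dist (x j) (x k) * dist (x i) (x k) =
      ∑ i, (∑ j, dist (x i) (x j)) ^ 2 := by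
    rw [sum_congr rfl fun i _ => sum_comm, sum_comm]
    refine sum_congr rfl fun k _ => ?_
    rw [sq, sum_mul_sum, sum_comm]
    simp only [dist_comm (x k)]
  calc (Fintype.card ι : ℝ) * ∑ j, ∑ k, dist (x j) (x k) ^ 2
      = ∑ i : ι, ∑ j, ∑ k, dist (x j) (x k) ^ 2 := by simp
    _ ≤ ∑ i, ∑ j, ∑ k,
          (dist (x j) (x k) * dist (x j) (x i) + dist (x j) (x k) * dist (x i) (x k)) := by
      gcongr with i _ j _ k _
      exact hpoint i j k
    _ = 2 * ∑ i, (∑ j, dist (x i) (x j)) ^ 2 := by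
      simp only [sum_add_distrib, hfirst, hsecond]
      ring

theorem T₂_le_T₃ : T₂ x ≤ T₃ x := by
  have hcs := sq_sum_le_card_mul_sum_sq (s := univ) (f := fun i => ∑ j, dist (x i) (x j))
  rw [card_univ] at hcs
  rw [T₂, T₃, sum_sum_sum_dist_mul_dist]
  set N : ℝ := (Fintype.card ι : ℝ)
  rcases eq_or_ne N 0 with hN | hN
  · simp [hN]
  · calc (1 / N ^ 2 * ∑ i, ∑ j, dist (x i) (x j)) ^ 2
        = (∑ i, ∑ j, dist (x i) (x j)) ^ 2 / N ^ 4 := by ring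
      _ ≤ (N * ∑ i, (∑ j, dist (x i) (x j)) ^ 2) / N ^ 4 := by gcongr
      _ = 1 / N ^ 3 * ∑ i, (∑ j, dist (x i) (x j)) ^ 2 := by field_simp

theorem T₁_le_two_mul_T₃ : T₁ x ≤ 2 * T₃ x := by
  have htri := card_mul_sum_sum_dist_sq_le x
  rw [T₁, T₃, sum_sum_sum_dist_mul_dist]
  set N : ℝ := (Fintype.card ι : ℝ)
  rcases eq_or_ne N 0 with hN | hN
  · simp [hN]
  · calc 1 / N ^ 2 * ∑ i, ∑ j, dist (x i) (x j) ^ 2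
        = (N * ∑ i, ∑ j, dist (x i) (x j) ^ 2) / N ^ 3 := by field_simp
      _ ≤ (2 * ∑ i, (∑ j, dist (x i) (x j)) ^ 2) / N ^ 3 := by gcongr
      _ = 2 * (1 / N ^ 3 * ∑ i, (∑ j, dist (x i) (x j)) ^ 2) := by ring

end DistanceVariance

open DistanceVariance in
theorem dVar_n_le_half_T1n_general (p n : ℕ) (X : Fin n → EuclideanSpace ℝ (Fin p)) :
    ((1 / (n : ℝ) ^ 2) * ∑ i, ∑ j, ‖X i - X j‖ ^ 2)
        + ((1 / (n : ℝ) ^ 2) * ∑ i, ∑ j, ‖X i - X j‖) ^ 2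
        - 2 * ((1 / (n : ℝ) ^ 3) * ∑ i, ∑ j, ∑ k, ‖X i - X j‖ * ‖X i - X k‖) ≤
      (1 / 2) * ((1 / (n : ℝ) ^ 2) * ∑ i, ∑ j, ‖X i - X j‖ ^ 2) := by
  have h₂₃ := T₂_le_T₃ X
  have h₁₃ := T₁_le_two_mul_T₃ X
  simp only [T₁, T₂, T₃, dist_eq_norm, Fintype.card_fin] at h₂₃ h₁₃
  linarith

/-- The empirical distance variance `V_n² = T_{1,n} + T_{2,n} - 2 T_{3,n}` is at most
one-half of `T_{1,n}`. -/
theorem dVar_n_le_half_T1n (p n : ℕ) (hn : 0 < n) (X : Fin n → EuclideanSpace ℝ (Fin p)) :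
    ((1 / (n : ℝ) ^ 2) * ∑ i, ∑ j, ‖X i - X j‖ ^ 2)
        + ((1 / (n : ℝ) ^ 2) * ∑ i, ∑ j, ‖X i - X j‖) ^ 2
        - 2 * ((1 / (n : ℝ) ^ 3) * ∑ i, ∑ j, ∑ k, ‖X i - X j‖ * ‖X i - X k‖) ≤
      (1 / 2) * ((1 / (n : ℝ) ^ 2) * ∑ i, ∑ j, ‖X i - X j‖ ^ 2) :=
  dVar_n_le_half_T1n_general p n X
end

section
/- Let X be a random vector in R^p with E||X||^2 < \infty and components X^{(1)},...,X^{(p)}. Then the distance variance V^2(X) = T_1 + T_2 - 2T_3 satisfies V^2(X) \le \sum_{i=1}^p Var(X^{(i)}), where T_1 = E||X-X'||^2, T_2 = (E||X-X'||)^2, T_3 = E(||X-X'|| \cdot ||X-X''||) for i.i.d. copies X', X'' of X. -/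
/-! With `m x = ∫ ‖x - y‖ dμ(y)` the mean distance, `T₂ = (∫ m)² ≤ ∫ m² = T₃`, and integrating
`‖x - y‖² ≤ ‖x - y‖ (m x + m y)` (the triangle inequality through a third independent point)
gives `T₁ ≤ 2 T₃`. Hence `V² ≤ T₁ - T₃ ≤ T₁ / 2`, and `T₁ = 2 ∑ᵢ Var X⁽ⁱ⁾` coordinatewise.
Everything except the last identity holds in any separable metric space. -/

open MeasureTheory ProbabilityTheory

section Variance

variable {Ω : Type*} [MeasurableSpace Ω] {μ : Measure Ω} [IsProbabilityMeasure μ] {X : Ω → ℝ}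

lemma sq_integral_le_integral_sq (hX : MemLp X 2 μ) :
    (∫ ω, X ω ∂μ) ^ 2 ≤ ∫ ω, X ω ^ 2 ∂μ := by
  have := variance_nonneg X μ
  rwa [variance_eq_sub hX, sub_nonneg] at this

lemma integral_sub_sq_prod (hX : MemLp X 2 μ) :
    ∫ q, (X q.1 - X q.2) ^ 2 ∂(μ.prod μ) = 2 * Var[X; μ] := by
  have hX1 := hX.integrable one_le_two
  have hmean : ∫ q, (X q.1 - X q.2) ∂(μ.prod μ) = 0 := by
    rw [integral_sub (hX1.comp_fst μ) (hX1.comp_snd μ), integral_fun_fst, integral_fun_snd,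
      sub_self]
  have hvar := variance_add_prod hX hX.neg
  simp only [Pi.neg_apply, ← sub_eq_add_neg, variance_neg, ← two_mul] at hvar
  rw [← hvar, variance_of_integral_eq_zero (by fun_prop) hmean]

end Variance

section MeanDist

variable {α : Type*} [PseudoMetricSpace α] [MeasurableSpace α]

noncomputable def meanDist (μ : Measure α) (x : α) : ℝ := ∫ y, dist x y ∂μ

noncomputable def distVariance (μ : Measure α) : ℝ :=
  ∫ q, dist q.1 q.2 ^ 2 ∂(μ.prod μ) + (∫ q, dist q.1 q.2 ∂(μ.prod μ)) ^ 2
    - 2 * ∫ q, dist q.1 q.2.1 * dist q.1 q.2.2 ∂(μ.prod (μ.prod μ))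

variable {μ : Measure α} {x₀ : α}

lemma meanDist_nonneg (x : α) : 0 ≤ meanDist μ x :=
  integral_nonneg fun _ => dist_nonneg

lemma integral_dist_mul_dist [SFinite μ] (x : α) :
    ∫ yz : α × α, dist x yz.1 * dist x yz.2 ∂(μ.prod μ) = meanDist μ x ^ 2 := by
  rw [integral_prod_mul, sq, meanDist]

variable [OpensMeasurableSpace α]

lemma integrable_dist_left [IsFiniteMeasure μ] (h : Integrable (fun y => dist y x₀) μ) (x : α) :
    Integrable (fun y => dist x y) μ :=
  ((integrable_const (dist x x₀)).add h).mono'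
    (continuous_const.dist continuous_id).aestronglyMeasurable
    (ae_of_all _ fun y => by
      simpa only [Real.norm_of_nonneg dist_nonneg, Pi.add_apply] using dist_triangle_right x y x₀)

variable [IsProbabilityMeasure μ]

lemma meanDist_le_dist_add (h : Integrable (fun y => dist y x₀) μ) (x : α) :
    meanDist μ x ≤ dist x x₀ + meanDist μ x₀ := by
  calc meanDist μ x ≤ ∫ y, (dist x x₀ + dist x₀ y) ∂μ :=
        integral_mono (integrable_dist_left h x)
          ((integrable_const _).add (integrable_dist_left h x₀)) fun y => dist_triangle x x₀ y
    _ = dist x x₀ + meanDist μ x₀ := by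
        rw [integral_add (integrable_const _) (integrable_dist_left h x₀), integral_const,
          probReal_univ, one_smul, meanDist]

lemma dist_le_meanDist_add_meanDist (h : Integrable (fun y => dist y x₀) μ) (x y : α) :
    dist x y ≤ meanDist μ x + meanDist μ y := by
  calc dist x y = ∫ _z, dist x y ∂μ := by rw [integral_const, probReal_univ, one_smul]
    _ ≤ ∫ z, (dist x z + dist y z) ∂μ :=
        integral_mono (integrable_const _)
          ((integrable_dist_left h x).add (integrable_dist_left h y))
          fun z => dist_triangle_right x y z
    _ = meanDist μ x + meanDist μ y :=
        integral_add (integrable_dist_left h x) (integrable_dist_left h y)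

variable [SecondCountableTopology α]

lemma stronglyMeasurable_meanDist : StronglyMeasurable (meanDist μ) :=
  continuous_dist.stronglyMeasurable.integral_prod_right'

lemma memLp_meanDist {p : ENNReal} (hp : 1 ≤ p) (h : MemLp (fun y => dist y x₀) p μ) :
    MemLp (meanDist μ) p μ :=
  (h.add (memLp_const (meanDist μ x₀))).mono' stronglyMeasurable_meanDist.aestronglyMeasurable
    (ae_of_all _ fun x => by
      rw [Real.norm_of_nonneg (meanDist_nonneg x)]
      exact meanDist_le_dist_add (h.integrable hp) x)

lemma integrable_meanDist (h : Integrable (fun y => dist y x₀) μ) : Integrable (meanDist μ) μ :=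
  memLp_one_iff_integrable.1 (memLp_meanDist le_rfl (memLp_one_iff_integrable.2 h))

lemma integral_dist_prod (h : Integrable (fun y => dist y x₀) μ) :
    ∫ q, dist q.1 q.2 ∂(μ.prod μ) = ∫ x, meanDist μ x ∂μ := by
  refine integral_prod _ ((integrable_prod_iff continuous_dist.aestronglyMeasurable).2 ⟨?_, ?_⟩)
  · exact ae_of_all _ (integrable_dist_left h)
  · simp_rw [Real.norm_of_nonneg dist_nonneg]
    exact integrable_meanDist h

lemma integral_dist_mul_dist_prod (h : MemLp (fun y => dist y x₀) 2 μ) :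
    ∫ q, dist q.1 q.2.1 * dist q.1 q.2.2 ∂(μ.prod (μ.prod μ)) = ∫ x, meanDist μ x ^ 2 ∂μ := by
  have h1 := h.integrable one_le_two
  have hmeas : AEStronglyMeasurable (fun q : α × α × α => dist q.1 q.2.1 * dist q.1 q.2.2)
      (μ.prod (μ.prod μ)) := by fun_prop
  rw [integral_prod _ ((integrable_prod_iff hmeas).2 ⟨?_, ?_⟩)]
  · simp_rw [integral_dist_mul_dist]
  · exact ae_of_all _ fun x => (integrable_dist_left h1 x).mul_prod (integrable_dist_left h1 x)
  · simpa only [Real.norm_of_nonneg (mul_nonneg dist_nonneg dist_nonneg), integral_dist_mul_dist]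
      using (memLp_meanDist one_le_two h).integrable_sq

lemma integrable_dist_mul_meanDist_prod (h : MemLp (fun y => dist y x₀) 2 μ) :
    Integrable (fun q : α × α => dist q.1 q.2 * meanDist μ q.1) (μ.prod μ) := by
  have h1 := h.integrable one_le_two
  refine (integrable_prod_iff ?_).2 ⟨?_, ?_⟩
  · exact continuous_dist.aestronglyMeasurable.mul
      (stronglyMeasurable_meanDist.comp_measurable measurable_fst).aestronglyMeasurable
  · exact ae_of_all _ fun x => (integrable_dist_left h1 x).mul_const (meanDist μ x)
  · simp_rw [Real.norm_of_nonneg (mul_nonneg dist_nonneg (meanDist_nonneg _)),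
      integral_mul_const]
    exact (memLp_meanDist one_le_two h).integrable_sq.congr
      (ae_of_all _ fun x => sq (meanDist μ x))

lemma integral_dist_mul_meanDist_prod (h : MemLp (fun y => dist y x₀) 2 μ) :
    ∫ q, dist q.1 q.2 * meanDist μ q.1 ∂(μ.prod μ) = ∫ x, meanDist μ x ^ 2 ∂μ := by
  rw [integral_prod _ (integrable_dist_mul_meanDist_prod h)]
  simp_rw [integral_mul_const, sq]
  rfl

lemma integral_dist_sq_prod_le (h : MemLp (fun y => dist y x₀) 2 μ) :
    ∫ q, dist q.1 q.2 ^ 2 ∂(μ.prod μ) ≤ 2 * ∫ x, meanDist μ x ^ 2 ∂μ := by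
  set g := fun q : α × α => dist q.1 q.2 * meanDist μ q.1
  have hg : Integrable g (μ.prod μ) := integrable_dist_mul_meanDist_prod h
  have hg_swap : Integrable (fun q => g q.swap) (μ.prod μ) := hg.swap
  have hpt (q : α × α) : dist q.1 q.2 ^ 2 ≤ g q + g q.swap := by
    simp only [g, Prod.fst_swap, Prod.snd_swap, dist_comm q.2 q.1, ← mul_add, sq]
    exact mul_le_mul_of_nonneg_left
      (dist_le_meanDist_add_meanDist (h.integrable one_le_two) _ _) dist_nonneg
  calc ∫ q, dist q.1 q.2 ^ 2 ∂(μ.prod μ) ≤ ∫ q, (g q + g q.swap) ∂(μ.prod μ) :=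
        integral_mono_of_nonneg (ae_of_all _ fun _ => sq_nonneg _) (hg.add hg_swap)
          (ae_of_all _ hpt)
    _ = 2 * ∫ x, meanDist μ x ^ 2 ∂μ := by
        rw [integral_add hg hg_swap, integral_prod_swap g, integral_dist_mul_meanDist_prod h]
        ring

theorem distVariance_le_half_integral_dist_sq (h : MemLp (fun y => dist y x₀) 2 μ) :
    distVariance μ ≤ (∫ q, dist q.1 q.2 ^ 2 ∂(μ.prod μ)) / 2 := by
  have hT1 := integral_dist_sq_prod_le h
  have hT2 := sq_integral_le_integral_sq (memLp_meanDist one_le_two h)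
  rw [distVariance, integral_dist_prod (h.integrable one_le_two), integral_dist_mul_dist_prod h]
  linarith

end MeanDist

lemma integral_norm_sub_sq_prod {ι : Type*} [Fintype ι] {μ : Measure (EuclideanSpace ℝ ι)}
    [IsProbabilityMeasure μ] (h : MemLp id 2 μ) :
    ∫ q, ‖q.1 - q.2‖ ^ 2 ∂(μ.prod μ) = 2 * ∑ i, Var[fun x => x i; μ] := by
  have hcoord (i : ι) : MemLp (fun x : EuclideanSpace ℝ ι => x i) 2 μ :=
    h.of_le (by fun_prop) (ae_of_all _ fun x => PiLp.norm_apply_le x i)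
  have hdiff (i : ι) : Integrable
      (fun q : EuclideanSpace ℝ ι × EuclideanSpace ℝ ι => (q.1 i - q.2 i) ^ 2) (μ.prod μ) :=
    (((hcoord i).comp_fst μ).sub ((hcoord i).comp_snd μ)).integrable_sq
  simp_rw [EuclideanSpace.real_norm_sq_eq, PiLp.sub_apply]
  rw [integral_finsetSum _ fun i _ => hdiff i, Finset.mul_sum]
  exact Finset.sum_congr rfl fun i _ => integral_sub_sq_prod (hcoord i)

/-- For a random vector `X` in `ℝ^p` with law `μ` and `E‖X‖² < ∞`, the distance variance
`V²(X) = T₁ + T₂ - 2T₃` is at most the sum of the variances of the components of `X`. -/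
theorem dVar_le_sum_var (p : ℕ) (μ : Measure (EuclideanSpace ℝ (Fin p)))
    [IsProbabilityMeasure μ] (h2 : Integrable (fun x => ‖x‖ ^ 2) μ) :
    (∫ q, ‖q.1 - q.2‖ ^ 2 ∂(μ.prod μ))
        + (∫ q, ‖q.1 - q.2‖ ∂(μ.prod μ)) ^ 2
        - 2 * (∫ q, ‖q.1 - q.2.1‖ * ‖q.1 - q.2.2‖ ∂(μ.prod (μ.prod μ))) ≤
      ∑ i : Fin p, ∫ x, (x i - ∫ y, y i ∂μ) ^ 2 ∂μ := by
  have hX : MemLp id 2 μ := (memLp_two_iff_integrable_sq_norm aestronglyMeasurable_id).2 h2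
  have hV := distVariance_le_half_integral_dist_sq (μ := μ) (x₀ := 0)
    (by simpa only [dist_zero_right, id_eq] using hX.norm)
  have hvar (i : Fin p) : Var[fun x => x i; μ] = ∫ x, (x i - ∫ y, y i ∂μ) ^ 2 ∂μ :=
    variance_eq_integral (by fun_prop)
  have hT1 := integral_norm_sub_sq_prod hX
  simp only [distVariance, dist_eq_norm] at hV
  simp only [hvar] at hT1
  linarith
end

section
/- Let X be a real-valued random variable with E(X^2) < \infty. Then (E|X-X'|)^2 \le (2/3) E|X-X'|^2, where X' is an independent copy of X. Equivalently, 3 \Delta^2(X) \le 4 \sigma^2(X). -/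
/-!
Put `G(x) = ∫ sign (x - y) dμ(y)`, which is `2F(x) - 1` when the cdf `F` is continuous.
Antisymmetry of `sign (x - y)` gives `E G(X) = 0`, and writing
`|x - y| = x sign (x - y) + y sign (y - x)` and exchanging `X, X'` gives
`Δ = 2 E[X G(X)] = 2 Cov(X, G(X))`. For three i.i.d. copies the cyclic sum of
`sign (a - b) sign (a - c)` is at most `1`, hence `E G(X)² ≤ 1/3`. Cauchy–Schwarz then gives
`Δ² ≤ 4 σ² / 3`, and `E(X - X')² = 2 σ²`.
-/

open MeasureTheory Real

namespace Real

@[fun_prop]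
lemma measurable_sign : Measurable Real.sign :=
  Measurable.ite measurableSet_Iio measurable_const <|
    Measurable.ite measurableSet_Ioi measurable_const measurable_const

lemma abs_sign_le_one (r : ℝ) : |sign r| ≤ 1 := by
  rcases sign_apply_eq r with h | h | h <;> simp [h]

lemma self_mul_sign (r : ℝ) : r * sign r = |r| := by
  rcases lt_trichotomy r 0 with h | rfl | h
  · rw [sign_of_neg h, abs_of_neg h]; ring
  · simp
  · rw [sign_of_pos h, abs_of_pos h, mul_one]

/-- Of three distinct points, the two extreme ones contribute `1` and the middle one `-1`. -/
lemma sign_sub_mul_sign_sub_add_le_one (x y z : ℝ) :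
    sign (x - y) * sign (x - z) + sign (z - x) * sign (z - y) + sign (y - z) * sign (y - x)
      ≤ 1 := by
  rcases lt_trichotomy x y with h1 | h1 | h1 <;>
  rcases lt_trichotomy x z with h2 | h2 | h2 <;>
  rcases lt_trichotomy y z with h3 | h3 | h3 <;>
  simp only [sign_of_pos, sign_of_neg, sub_pos, sub_neg, sub_self, sign_zero, h1, h2, h3] <;>
  norm_num

end Real

section

variable {α : Type*} [MeasurableSpace α]

/-- `(x, y, z) ↦ (z, x, y)` -/
def MeasurableEquiv.rotate₃ : α × α × α ≃ᵐ α × α × α :=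
  MeasurableEquiv.prodAssoc.symm.trans MeasurableEquiv.prodComm

lemma measurePreserving_rotate₃ (μ : Measure α) [SFinite μ] :
    MeasurePreserving MeasurableEquiv.rotate₃ (μ.prod (μ.prod μ)) (μ.prod (μ.prod μ)) :=
  Measure.measurePreserving_swap.comp ((measurePreserving_prodAssoc μ μ μ).symm _)

variable {μ : Measure α}

lemma integral_add_rotate₃_add_rotate₃ [SFinite μ] {f : α × α × α → ℝ}
    (hf : Integrable f (μ.prod (μ.prod μ))) :
    ∫ p, (f p + f (MeasurableEquiv.rotate₃ p) + f (MeasurableEquiv.rotate₃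
      (MeasurableEquiv.rotate₃ p))) ∂(μ.prod (μ.prod μ)) = 3 * ∫ p, f p ∂(μ.prod (μ.prod μ)) := by
  have hρ := measurePreserving_rotate₃ μ
  have hfρ : Integrable (fun p => f (MeasurableEquiv.rotate₃ p)) (μ.prod (μ.prod μ)) :=
    hρ.integrable_comp_of_integrable hf
  have hfρρ : Integrable (fun p => f (MeasurableEquiv.rotate₃ (MeasurableEquiv.rotate₃ p)))
      (μ.prod (μ.prod μ)) :=
    hρ.integrable_comp_of_integrable hfρ
  rw [integral_add (hf.fun_add hfρ) hfρρ, integral_add hf hfρ,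
    hρ.integral_comp' (fun p => f (MeasurableEquiv.rotate₃ p)), hρ.integral_comp' f]
  ring

lemma sq_integral_mul_le_integral_sq_mul_integral_sq {f g : α → ℝ} (hf : MemLp f 2 μ)
    (hg : MemLp g 2 μ) :
    (∫ x, f x * g x ∂μ) ^ 2 ≤ (∫ x, f x ^ 2 ∂μ) * ∫ x, g x ^ 2 ∂μ := by
  have hfg : Integrable (fun x => f x * g x) μ := hf.integrable_mul hg
  have hquad : ∀ t : ℝ, 0 ≤ (∫ x, f x ^ 2 ∂μ) * (t * t) + 2 * (∫ x, f x * g x ∂μ) * t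
      + ∫ x, g x ^ 2 ∂μ := fun t => by
    have hexp : ∫ x, (t * f x + g x) ^ 2 ∂μ
        = ∫ x, ((t * t) * f x ^ 2 + (2 * t) * (f x * g x) + g x ^ 2) ∂μ :=
      integral_congr_ae (.of_forall fun x => by ring)
    rw [integral_add (hf.integrable_sq.const_mul _ |>.fun_add (hfg.const_mul _)) hg.integrable_sq,
      integral_add (hf.integrable_sq.const_mul _) (hfg.const_mul _), integral_const_mul,
      integral_const_mul] at hexp
    linarith [hexp ▸ integral_nonneg fun x => sq_nonneg (t * f x + g x)]
  have := discrim_le_zero hquad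
  rw [discrim] at this
  nlinarith

lemma integral_prod_sub_sq [IsProbabilityMeasure μ] {f : α → ℝ} (hf : MemLp f 2 μ) :
    ∫ q, (f q.1 - f q.2) ^ 2 ∂(μ.prod μ) = 2 * ∫ x, (f x - ∫ y, f y ∂μ) ^ 2 ∂μ := by
  set g := fun x => f x - ∫ y, f y ∂μ
  have hg : MemLp g 2 μ := hf.sub (memLp_const _)
  have hg_mean : ∫ x, g x ∂μ = 0 := by
    simp [g, integral_sub (hf.integrable one_le_two) (integrable_const _)]
  have hfst := (hg.integrable_sq.comp_fst μ)
  have hsnd := (hg.integrable_sq.comp_snd μ)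
  have hmul := (hg.integrable one_le_two).mul_prod (hg.integrable one_le_two)
  calc ∫ q, (f q.1 - f q.2) ^ 2 ∂(μ.prod μ)
      = ∫ q, (g q.1 ^ 2 + g q.2 ^ 2 - 2 * (g q.1 * g q.2)) ∂(μ.prod μ) :=
        integral_congr_ae (.of_forall fun q => by simp only [g]; ring)
    _ = 2 * ∫ x, g x ^ 2 ∂μ := by
        rw [integral_sub (hfst.fun_add hsnd) (hmul.const_mul 2), integral_add hfst hsnd,
          integral_const_mul, integral_prod_mul, integral_fun_fst (fun x => g x ^ 2),
          integral_fun_snd (fun x => g x ^ 2), hg_mean]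
        simp only [probReal_univ, smul_eq_mul, one_mul, mul_zero, sub_zero]
        ring

end

/-- `F(x⁻) + F(x) - 1` for the cdf `F` of `μ`: `2F - 1` made symmetric at the atoms. -/
noncomputable def signMean (μ : Measure ℝ) (x : ℝ) : ℝ := ∫ y, sign (x - y) ∂μ

section SignMean

variable (μ : Measure ℝ)

lemma measurable_sign_sub : Measurable fun q : ℝ × ℝ => sign (q.1 - q.2) :=
  measurable_sign.comp (measurable_fst.sub measurable_snd)

lemma integrable_sign_sub [IsFiniteMeasure μ] :
    Integrable (fun q : ℝ × ℝ => sign (q.1 - q.2)) (μ.prod μ) :=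
  .of_bound measurable_sign_sub.aestronglyMeasurable 1 (.of_forall fun _ => abs_sign_le_one _)

lemma measurable_signMean [SFinite μ] : Measurable (signMean μ) :=
  (measurable_sign_sub.stronglyMeasurable.integral_prod_right' (ν := μ)).measurable

lemma abs_signMean_le_one [IsProbabilityMeasure μ] (x : ℝ) : |signMean μ x| ≤ 1 := by
  simpa [signMean] using norm_integral_le_of_norm_le_const (μ := μ) (f := fun y => sign (x - y))
    (.of_forall fun y => (Real.norm_eq_abs _).trans_le (abs_sign_le_one (x - y)))

lemma integral_signMean [IsFiniteMeasure μ] : ∫ x, signMean μ x ∂μ = 0 := by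
  have hswap : ∫ q, sign (q.2 - q.1) ∂(μ.prod μ) = ∫ q, sign (q.1 - q.2) ∂(μ.prod μ) :=
    integral_prod_swap fun q : ℝ × ℝ => sign (q.1 - q.2)
  have hneg : ∫ q, sign (q.2 - q.1) ∂(μ.prod μ) = -∫ q, sign (q.1 - q.2) ∂(μ.prod μ) := by
    simp only [← integral_neg, ← sign_neg, neg_sub]
  have h : ∫ q, sign (q.1 - q.2) ∂(μ.prod μ) = 0 := by linarith
  rwa [integral_prod _ (integrable_sign_sub μ)] at h

lemma integral_signMean_sq_le [IsProbabilityMeasure μ] : ∫ x, signMean μ x ^ 2 ∂μ ≤ 1 / 3 := by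
  set Φ : ℝ × ℝ × ℝ → ℝ := fun p => sign (p.1 - p.2.1) * sign (p.1 - p.2.2)
  have hΦ : Integrable Φ (μ.prod (μ.prod μ)) := by
    refine .of_bound (by fun_prop) 1 (.of_forall fun p => ?_)
    rw [Real.norm_eq_abs, abs_mul]
    exact mul_le_one₀ (abs_sign_le_one _) (abs_nonneg _) (abs_sign_le_one _)
  have hΦ_eq : ∫ p, Φ p ∂(μ.prod (μ.prod μ)) = ∫ x, signMean μ x ^ 2 ∂μ := by
    rw [integral_prod _ hΦ]
    refine integral_congr_ae (.of_forall fun x => ?_)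
    exact (integral_prod_mul (fun y => sign (x - y)) (fun z => sign (x - z))).trans (sq _).symm
  have hsum : ∫ p, (Φ p + Φ (MeasurableEquiv.rotate₃ p) + Φ (MeasurableEquiv.rotate₃
      (MeasurableEquiv.rotate₃ p))) ∂(μ.prod (μ.prod μ)) ≤ 1 := by
    have hρ := measurePreserving_rotate₃ μ
    have hΦρ : Integrable (fun p => Φ (MeasurableEquiv.rotate₃ p)) (μ.prod (μ.prod μ)) :=
      hρ.integrable_comp_of_integrable hΦ
    refine (integral_mono ((hΦ.fun_add hΦρ).fun_add (hρ.integrable_comp_of_integrable hΦρ))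
      (integrable_const 1) fun p => ?_).trans_eq (by simp)
    exact sign_sub_mul_sign_sub_add_le_one p.1 p.2.1 p.2.2
  rw [integral_add_rotate₃_add_rotate₃ hΦ, hΦ_eq] at hsum
  linarith

lemma abs_sub_eq_mul_sign_add_mul_sign (a b : ℝ) :
    |a - b| = a * sign (a - b) + b * sign (b - a) := by
  rw [← neg_sub a b, sign_neg, ← self_mul_sign]
  ring

lemma integral_abs_sub_eq [IsFiniteMeasure μ] (hX : Integrable (fun x => x) μ) :
    ∫ q, |q.1 - q.2| ∂(μ.prod μ) = 2 * ∫ x, x * signMean μ x ∂μ := by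
  have hmul_sign : Integrable (fun q : ℝ × ℝ => q.1 * sign (q.1 - q.2)) (μ.prod μ) :=
    (hX.comp_fst μ).mul_bdd measurable_sign_sub.aestronglyMeasurable
      (.of_forall fun _ => abs_sign_le_one _)
  have hswap :
      ∫ q, q.2 * sign (q.2 - q.1) ∂(μ.prod μ) = ∫ q, q.1 * sign (q.1 - q.2) ∂(μ.prod μ) :=
    integral_prod_swap fun q : ℝ × ℝ => q.1 * sign (q.1 - q.2)
  have hfst : ∫ q, q.1 * sign (q.1 - q.2) ∂(μ.prod μ) = ∫ x, x * signMean μ x ∂μ := by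
    rw [integral_prod _ hmul_sign]
    simp only [integral_const_mul, signMean]
  rw [integral_congr_ae (.of_forall fun q : ℝ × ℝ => abs_sub_eq_mul_sign_add_mul_sign q.1 q.2),
    integral_add (g := fun q : ℝ × ℝ => q.2 * sign (q.2 - q.1)) hmul_sign hmul_sign.swap, hswap,
    hfst]
  ring

lemma sq_integral_abs_sub_le [IsProbabilityMeasure μ] (hX : MemLp (fun x : ℝ => x) 2 μ) :
    (∫ q, |q.1 - q.2| ∂(μ.prod μ)) ^ 2 ≤ 4 / 3 * ∫ x, (x - ∫ y, y ∂μ) ^ 2 ∂μ := by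
  set m := ∫ y, y ∂μ
  have hG : MemLp (signMean μ) 2 μ :=
    .of_bound (measurable_signMean μ).aestronglyMeasurable 1 (.of_forall (abs_signMean_le_one μ))
  have hcov : ∫ x, x * signMean μ x ∂μ = ∫ x, (x - m) * signMean μ x ∂μ := by
    simp_rw [sub_mul]
    rw [integral_sub (f := fun x => x * signMean μ x) (hX.integrable_mul hG)
      ((hG.integrable one_le_two).const_mul m), integral_const_mul, integral_signMean, mul_zero,
      sub_zero]
  have hCS := sq_integral_mul_le_integral_sq_mul_integral_sq (f := fun x => x - m)
    (hX.sub (memLp_const m)) hG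
  rw [integral_abs_sub_eq μ (hX.integrable one_le_two), hcov]
  have hV : 0 ≤ ∫ x, (x - m) ^ 2 ∂μ := integral_nonneg fun x => sq_nonneg (x - m)
  nlinarith [integral_signMean_sq_le μ]

end SignMean

/-- For a real random variable `X` with law `μ` and `E(X²) < ∞`, Gini's mean difference
`Δ(X) = E|X-X'|` satisfies `Δ(X)² ≤ (2/3) E|X-X'|²`; equivalently `3Δ²(X) ≤ 4σ²(X)`. -/
theorem gini_sq_le_twothirds_T1 (μ : Measure ℝ) [IsProbabilityMeasure μ]
    (h2 : Integrable (fun x => x ^ 2) μ) :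
    (∫ q, |q.1 - q.2| ∂(μ.prod μ)) ^ 2 ≤ (2 / 3) * ∫ q, (q.1 - q.2) ^ 2 ∂(μ.prod μ) ∧
      3 * (∫ q, |q.1 - q.2| ∂(μ.prod μ)) ^ 2 ≤
        4 * ∫ x, (x - ∫ y, y ∂μ) ^ 2 ∂μ := by
  have hX : MemLp (fun x : ℝ => x) 2 μ :=
    (memLp_two_iff_integrable_sq aestronglyMeasurable_id).2 h2
  have hΔ := sq_integral_abs_sub_le μ hX
  refine ⟨?_, by linarith⟩
  rw [integral_prod_sub_sq hX]
  linarith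
end

section
/- Let X be exponentially distributed with rate \lambda > 0. Then the distance variance V^2(X) = 1/(3\lambda^2). -/
open MeasureTheory

/-- The characteristic function of a law `μ` on `ℝ`. -/
noncomputable def charF (μ : Measure ℝ) (t : ℝ) : ℂ :=
  ∫ x, Complex.exp ((t * x : ℝ) * Complex.I) ∂μ

/-- The distance variance of a real random variable with law `μ`, defined via the
characteristic-function integral `V²(X) = π⁻² ∬ |f(s+t) - f(s)f(t)|² / (s²t²) ds dt`. -/
noncomputable def distVar (μ : Measure ℝ) : ℝ :=
  (1 / Real.pi ^ 2) *
    ∫ q : ℝ × ℝ, ‖charF μ (q.1 + q.2) - charF μ q.1 * charF μ q.2‖ ^ 2 / (q.1 ^ 2 * q.2 ^ 2)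

/-!
The characteristic function of the exponential law is `φ(t) = λ / (λ - i t)`, and
`φ(s + t) - φ(s) φ(t) = -λ s t / ((λ - i(s + t)) (λ - i s) (λ - i t))`, so the integrand of the
distance variance is the rational function `λ² / ((λ² + s²) (λ² + t²) (λ² + (s + t)²))`.
Integrating in `t` is a convolution of two Cauchy kernels, which is again a Cauchy kernel:
`∫ dt / ((a² + t²) (a² + (s + t)²)) = 2π / (a (s² + 4a²))`. A partial fraction decomposition in `s`
then leaves `(2π / 3λ) ∫ (1 / (λ² + s²) - 1 / (4λ² + s²)) ds = π² / (3λ²)`.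
-/

open Real Set Filter Topology MeasureTheory ProbabilityTheory

section CauchyKernel

variable {a : ℝ}

lemma inv_sq_add_sq_eq_inv_sq_mul_inv_one_add_sq (ha : a ≠ 0) (x : ℝ) :
    (a ^ 2 + x ^ 2)⁻¹ = (a ^ 2)⁻¹ * (1 + (a⁻¹ * x) ^ 2)⁻¹ := by
  field_simp

lemma integrable_inv_sq_add_sq (ha : a ≠ 0) : Integrable fun x : ℝ ↦ (a ^ 2 + x ^ 2)⁻¹ := by
  simp_rw [inv_sq_add_sq_eq_inv_sq_mul_inv_one_add_sq ha]
  exact (integrable_inv_one_add_sq.comp_mul_left' (inv_ne_zero ha)).const_mul _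

lemma integral_univ_inv_sq_add_sq (ha : a ≠ 0) : ∫ x : ℝ, (a ^ 2 + x ^ 2)⁻¹ = π / |a| := by
  simp_rw [inv_sq_add_sq_eq_inv_sq_mul_inv_one_add_sq ha]
  rw [integral_const_mul, Measure.integral_comp_mul_left (fun y ↦ (1 + y ^ 2)⁻¹),
    integral_univ_inv_one_add_sq, inv_inv, smul_eq_mul, ← sq_abs]
  have : |a| ≠ 0 := abs_ne_zero.2 ha
  field_simp

lemma integrable_inv_sq_add_sq_mul_inv_sq_add_sq (ha : a ≠ 0) (s : ℝ) :
    Integrable fun t : ℝ ↦ (a ^ 2 + t ^ 2)⁻¹ * (a ^ 2 + (s + t) ^ 2)⁻¹ := by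
  refine (integrable_inv_sq_add_sq ha).mul_bdd (c := (a ^ 2)⁻¹) (by fun_prop) ?_
  refine .of_forall fun t ↦ ?_
  rw [norm_inv, Real.norm_of_nonneg (by positivity)]
  gcongr
  nlinarith [sq_nonneg (s + t)]

/- The primitive comes from the partial fraction decomposition
`s (s² + 4a²) / ((a² + t²) (a² + (s + t)²))`
`  = (s - 2t) / (a² + t²) + (3s + 2t) / (a² + (s + t)²)`. -/
lemma hasDerivAt_primitive_inv_sq_add_sq_mul_inv_sq_add_sq (ha : a ≠ 0) {s : ℝ} (hs : s ≠ 0)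
    (t : ℝ) :
    HasDerivAt (fun t ↦ (s ^ 2 + 4 * a ^ 2)⁻¹ * (a⁻¹ * (arctan (t / a) + arctan ((s + t) / a))
        - s⁻¹ * (log (a ^ 2 + t ^ 2) - log (a ^ 2 + (s + t) ^ 2))))
      ((a ^ 2 + t ^ 2)⁻¹ * (a ^ 2 + (s + t) ^ 2)⁻¹) t := by
  have hA : a ^ 2 + t ^ 2 ≠ 0 := by positivity
  have hB : a ^ 2 + (s + t) ^ 2 ≠ 0 := by positivity
  have hid : HasDerivAt (fun t : ℝ ↦ t) 1 t := hasDerivAt_id' t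
  have hsid : HasDerivAt (fun t : ℝ ↦ s + t) 1 t := hid.const_add s
  refine (((((hid.div_const a).arctan).add (hsid.div_const a).arctan).const_mul a⁻¹).sub
    ((((hid.pow 2).const_add (a ^ 2)).log hA).sub (((hsid.pow 2).const_add (a ^ 2)).log hB)
      |>.const_mul s⁻¹)).const_mul (s ^ 2 + 4 * a ^ 2)⁻¹ |>.congr_deriv ?_
  simp only [Pi.pow_apply]
  field_simp
  ring

lemma tendsto_log_sq_add_sq_sub_log_sq_add_sq (ha : a ≠ 0) (s : ℝ) :
    Tendsto (fun t ↦ log (a ^ 2 + t ^ 2) - log (a ^ 2 + (s + t) ^ 2)) (cocompact ℝ) (𝓝 0) := by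
  -- in the variable `u = t⁻¹` the ratio of the two arguments is continuous at `u = 0`
  let g : ℝ → ℝ := fun u ↦ (a ^ 2 * u ^ 2 + 1) / (a ^ 2 * u ^ 2 + (s * u + 1) ^ 2)
  have hg : ContinuousAt g 0 := by fun_prop (disch := simp)
  have hlog : Tendsto (log ∘ g) (𝓝 0) (𝓝 0) := by
    simpa [g] using ((continuousAt_log (by simp [g])).comp hg).tendsto
  rw [← Metric.cobounded_eq_cocompact]
  refine (hlog.comp tendsto_inv₀_cobounded).congr' ?_
  filter_upwards [Bornology.eventually_ne_cobounded 0] with t ht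
  rw [Function.comp_apply, Function.comp_apply, ← log_div (by positivity) (by positivity)]
  congr 1
  simp only [g]
  field_simp

lemma tendsto_arctan_add_div_atTop (ha : 0 < a) (r : ℝ) :
    Tendsto (fun t ↦ arctan ((r + t) / a)) atTop (𝓝 (π / 2)) :=
  (tendsto_nhds_of_tendsto_nhdsWithin tendsto_arctan_atTop).comp
    ((tendsto_atTop_add_const_left _ r tendsto_id).atTop_div_const ha)

lemma tendsto_arctan_add_div_atBot (ha : 0 < a) (r : ℝ) :
    Tendsto (fun t ↦ arctan ((r + t) / a)) atBot (𝓝 (-(π / 2))) :=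
  (tendsto_nhds_of_tendsto_nhdsWithin tendsto_arctan_atBot).comp
    ((tendsto_atBot_add_const_left _ r tendsto_id).atBot_div_const ha)

theorem integral_inv_sq_add_sq_mul_inv_sq_add_sq (ha : 0 < a) {s : ℝ} (hs : s ≠ 0) :
    ∫ t, (a ^ 2 + t ^ 2)⁻¹ * (a ^ 2 + (s + t) ^ 2)⁻¹ = 2 * π / (a * (s ^ 2 + 4 * a ^ 2)) := by
  have hlog := tendsto_log_sq_add_sq_sub_log_sq_add_sq ha.ne' s
  have hbot := (((tendsto_arctan_add_div_atBot ha 0).add (tendsto_arctan_add_div_atBot ha s)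
    ).const_mul a⁻¹ |>.sub ((hlog.mono_left atBot_le_cocompact).const_mul s⁻¹)
    ).const_mul (s ^ 2 + 4 * a ^ 2)⁻¹
  have htop := (((tendsto_arctan_add_div_atTop ha 0).add (tendsto_arctan_add_div_atTop ha s)
    ).const_mul a⁻¹ |>.sub ((hlog.mono_left atTop_le_cocompact).const_mul s⁻¹)
    ).const_mul (s ^ 2 + 4 * a ^ 2)⁻¹
  simp only [zero_add] at hbot htop
  rw [integral_of_hasDerivAt_of_tendsto
    (hasDerivAt_primitive_inv_sq_add_sq_mul_inv_sq_add_sq ha.ne' hs)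
    (integrable_inv_sq_add_sq_mul_inv_sq_add_sq ha.ne' s) hbot htop]
  field_simp
  ring

end CauchyKernel

section CharFun

open Complex

lemma sq_norm_ofReal_sub_mul_I (x y : ℝ) : ‖(x : ℂ) - y * I‖ ^ 2 = x ^ 2 + y ^ 2 := by
  rw [Complex.sq_norm, sub_eq_add_neg, ← neg_mul, ← ofReal_neg, normSq_add_mul_I, neg_sq]

lemma ofReal_sub_mul_I_ne_zero {x : ℝ} (hx : x ≠ 0) (y : ℝ) : (x : ℂ) - y * I ≠ 0 := by
  intro h
  simpa [hx] using congrArg re h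

lemma charF_expMeasure {l : ℝ} (hl : 0 < l) (t : ℝ) :
    charF (expMeasure l) t = l / (l - t * I) := by
  have hpdf (x : ℝ) : (exponentialPDF l x).toReal • cexp ((t * x : ℝ) * I) =
      indicator (Ici 0) (fun x : ℝ ↦ l * cexp ((t * I - l) * x)) x := by
    rcases lt_or_ge x 0 with hx | hx
    · simp [exponentialPDF_of_neg hx, hx]
    · rw [exponentialPDF_of_nonneg hx, indicator_of_mem (mem_Ici.2 hx),
        ENNReal.toReal_ofReal (by positivity), real_smul]
      push_cast
      rw [mul_assoc, ← Complex.exp_add]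
      ring_nf
  have hne := ofReal_sub_mul_I_ne_zero hl.ne' t
  have hne' : (t * I - l : ℂ) ≠ 0 := by
    rw [← neg_sub]
    exact neg_ne_zero.2 hne
  rw [charF, show expMeasure l = volume.withDensity (exponentialPDF l) from rfl,
    integral_withDensity_eq_integral_toReal_smul
      (f := exponentialPDF l) (measurable_exponentialPDFReal l).ennreal_ofReal
      (.of_forall fun _ ↦ ENNReal.ofReal_lt_top),
    integral_congr_ae (.of_forall hpdf), integral_indicator measurableSet_Ici,
    integral_Ici_eq_integral_Ioi, integral_const_mul,
    integral_exp_mul_complex_Ioi (by simpa using hl) 0]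
  simp only [ofReal_zero, mul_zero, Complex.exp_zero]
  field_simp
  ring

lemma sq_norm_div_sub_div_mul_div {l : ℝ} (hl : l ≠ 0) (s t : ℝ) :
    ‖(l : ℂ) / (l - (s + t : ℝ) * I) - l / (l - s * I) * (l / (l - t * I))‖ ^ 2 =
      (l * s * t) ^ 2 / ((l ^ 2 + (s + t) ^ 2) * ((l ^ 2 + s ^ 2) * (l ^ 2 + t ^ 2))) := by
  have hsub : (l : ℂ) / (l - (s + t : ℝ) * I) - l / (l - s * I) * (l / (l - t * I)) =
      (-(l * s * t) : ℝ) / ((l - (s + t : ℝ) * I) * ((l - s * I) * (l - t * I))) := by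
    have h₁ := ofReal_sub_mul_I_ne_zero hl (s + t)
    have h₂ := ofReal_sub_mul_I_ne_zero hl s
    have h₃ := ofReal_sub_mul_I_ne_zero hl t
    rw [div_mul_div_comm, div_sub_div _ _ h₁ (mul_ne_zero h₂ h₃)]
    congr 1
    push_cast
    linear_combination (l * s * t : ℂ) * I_sq
  rw [hsub, norm_div, div_pow, norm_mul, norm_mul, mul_pow, mul_pow, sq_norm_ofReal_sub_mul_I,
    sq_norm_ofReal_sub_mul_I, sq_norm_ofReal_sub_mul_I, norm_real, Real.norm_eq_abs, sq_abs,
    neg_sq]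

end CharFun

lemma distVar_integrand_expMeasure_eq {l : ℝ} (hl : 0 < l) {s t : ℝ} (hs : s ≠ 0) (ht : t ≠ 0) :
    ‖charF (expMeasure l) (s + t) - charF (expMeasure l) s * charF (expMeasure l) t‖ ^ 2 /
        (s ^ 2 * t ^ 2) =
      l ^ 2 / (l ^ 2 + s ^ 2) * ((l ^ 2 + t ^ 2)⁻¹ * (l ^ 2 + (s + t) ^ 2)⁻¹) := by
  rw [charF_expMeasure hl, charF_expMeasure hl, charF_expMeasure hl,
    sq_norm_div_sub_div_mul_div hl.ne']
  field_simp

lemma integrable_distVar_integrand_expMeasure {l : ℝ} (hl : l ≠ 0) :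
    Integrable (fun q : ℝ × ℝ ↦
      l ^ 2 / (l ^ 2 + q.1 ^ 2) * ((l ^ 2 + q.2 ^ 2)⁻¹ * (l ^ 2 + (q.1 + q.2) ^ 2)⁻¹))
      (volume.prod volume) := by
  refine ((integrable_inv_sq_add_sq hl).mul_prod (integrable_inv_sq_add_sq hl)).mono'
    (by fun_prop) (.of_forall fun q ↦ ?_)
  rw [Real.norm_of_nonneg (by positivity)]
  calc _ = (l ^ 2 + q.1 ^ 2)⁻¹ * (l ^ 2 + q.2 ^ 2)⁻¹ * (l ^ 2 / (l ^ 2 + (q.1 + q.2) ^ 2)) := by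
        ring
    _ ≤ (l ^ 2 + q.1 ^ 2)⁻¹ * (l ^ 2 + q.2 ^ 2)⁻¹ * 1 := by
        gcongr
        exact div_le_one_of_le₀ (le_add_of_nonneg_right (sq_nonneg _)) (by positivity)
    _ = _ := mul_one _

/-- For `X` exponentially distributed with rate `λ > 0`, the distance variance is
`1/(3λ²)`. -/
theorem distVar_exponential (l : ℝ) (hl : 0 < l) :
    distVar (ProbabilityTheory.expMeasure l) = 1 / (3 * l ^ 2) := by
  let G : ℝ × ℝ → ℝ := fun q ↦
    l ^ 2 / (l ^ 2 + q.1 ^ 2) * ((l ^ 2 + q.2 ^ 2)⁻¹ * (l ^ 2 + (q.1 + q.2) ^ 2)⁻¹)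
  have hG : ∀ᵐ q : ℝ × ℝ, ‖charF (expMeasure l) (q.1 + q.2) -
      charF (expMeasure l) q.1 * charF (expMeasure l) q.2‖ ^ 2 / (q.1 ^ 2 * q.2 ^ 2) = G q := by
    filter_upwards [Measure.quasiMeasurePreserving_fst.ae (Measure.ae_ne volume 0),
      Measure.quasiMeasurePreserving_snd.ae (Measure.ae_ne volume 0)] with q h₁ h₂
    exact distVar_integrand_expMeasure_eq hl h₁ h₂
  have hinner : ∀ᵐ s : ℝ,
      ∫ t, G (s, t) = 2 * π / (3 * l) * ((l ^ 2 + s ^ 2)⁻¹ - ((2 * l) ^ 2 + s ^ 2)⁻¹) := by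
    filter_upwards [Measure.ae_ne volume 0] with s hs
    simp only [G]
    rw [integral_const_mul, integral_inv_sq_add_sq_mul_inv_sq_add_sq hl hs]
    field_simp
    ring
  have h2l : 2 * l ≠ 0 := by positivity
  rw [distVar, integral_congr_ae hG, Measure.volume_eq_prod,
    integral_prod G (integrable_distVar_integrand_expMeasure hl.ne'), integral_congr_ae hinner,
    integral_const_mul,
    integral_sub (integrable_inv_sq_add_sq hl.ne') (integrable_inv_sq_add_sq h2l),
    integral_univ_inv_sq_add_sq hl.ne', integral_univ_inv_sq_add_sq h2l, abs_of_pos hl,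
    abs_of_pos (by positivity)]
  field_simp
  ring
end
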